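/- For every n ≥ 2 and every link pattern π′ of n strands that pairs 2n−2 with 2n−1, if m is the exposure number of π′, then for each j with 1 ≤ j ≤ m there is exactly one link pattern μ of n strands with e(μ) = π′ and exposure number of μ equal to j; i.e., the exposure number is a bijection from the fiber e⁻¹(π′) onto {1, 2, …, m}. -/

import Mathlib

/-- A link pattern of `n` strands: a fixed-point-free involution of `{0, …, 2n-1}`
that is noncrossing. -/
def IsLinkPattern (n : ℕ) (μ : Fin (2*n) → Fin (2*n)) : Prop :=
  (∀ i, μ (μ i) = i) ∧ (∀ i, μ i ≠ i) ∧
  (∀ a b c d : Fin (2*n), a < b → b < c → c < d → μ a = c → μ b = d → False)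

/-- The exposure number of `μ`: the number of outermost links `(a, b)` (pairs with
`a < b`, `μ a = b`, such that there is no link `(c, d)` with `c < a` and `b < d`). -/
noncomputable def exposure (n : ℕ) (μ : Fin (2*n) → Fin (2*n)) : ℕ :=
  Nat.card {p : Fin (2*n) × Fin (2*n) //
    p.1 < p.2 ∧ μ p.1 = p.2 ∧ ∀ c d : Fin (2*n), c < p.1 → p.2 < d → μ c ≠ d}

/-- The Temperley–Lieb generator `e` (acting at the sites `2n-2`, `2n-1`):
`e(μ) = μ` if `μ (2n-2) = 2n-1`; otherwise `e(μ)` pairs `2n-2` with `2n-1`,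
pairs `μ (2n-2)` with `μ (2n-1)`, and agrees with `μ` elsewhere. -/
def eFun (n : ℕ) (μ : Fin (2*n) → Fin (2*n)) : Fin (2*n) → Fin (2*n) := fun i =>
  if h : 1 ≤ n then
    let a : Fin (2*n) := ⟨2*n - 2, by omega⟩
    let b : Fin (2*n) := ⟨2*n - 1, by omega⟩
    if μ a = b then μ i
    else if i = a then b
    else if i = b then a
    else if i = μ a then μ b
    else if i = μ b then μ a
    else μ i
  else μ i

/-!
For a link pattern, the right endpoints of the outermost links are exactly the points `d`
for which `[0, d]` is closed under the involution, so the exposure number counts these closed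
ends. If `π'` pairs `2n-2` with `2n-1`, the fiber `e⁻¹(π')` consists of the conjugates of `π'`
by the transpositions `(x, 2n-1)`, `x` a closed end of `π'` (for `x = 2n-1` this is `π'`
itself). The closed ends of such a conjugate are `2n-1` and the closed ends of `π'` left of
`π' x`, so its exposure number is the rank of `x` among the closed ends of `π'`.
-/

open Set

theorem Set.Finite.bijOn_ncard_inter_Iic {α : Type*} [LinearOrder α] {D : Set α}
    (hD : D.Finite) : BijOn (fun x => (D ∩ Iic x).ncard) D (Icc 1 D.ncard) := by
  have hmaps : MapsTo (fun x => (D ∩ Iic x).ncard) D (Icc 1 D.ncard) := fun x hx =>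
    ⟨(ncard_pos (hD.inter_of_left _)).2 ⟨x, hx, le_rfl⟩,
      ncard_le_ncard inter_subset_left hD⟩
  have hinj : InjOn (fun x => (D ∩ Iic x).ncard) D := by
    refine StrictMonoOn.injOn fun x _ x' hx' hlt => ncard_lt_ncard ?_ (hD.inter_of_left _)
    exact ⟨inter_subset_inter_right _ (Iic_subset_Iic.2 hlt.le),
      fun h => (h ⟨hx', le_rfl⟩).2.not_gt hlt⟩
  refine ⟨hmaps, hinj, (eq_of_subset_of_ncard_le hmaps.image_subset ?_).ge⟩
  rw [hinj.ncard_image, ncard_Icc_nat]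
  omega

theorem IsLinkPattern.injective {n : ℕ} {μ : Fin (2*n) → Fin (2*n)}
    (hμ : IsLinkPattern n μ) : Function.Injective μ :=
  Function.Involutive.injective hμ.1

namespace LinkPattern

variable {n : ℕ}

def secondLast (hn : 0 < n) : Fin (2*n) := ⟨2*n - 2, by omega⟩

def last (hn : 0 < n) : Fin (2*n) := ⟨2*n - 1, by omega⟩

@[simp] theorem val_secondLast (hn : 0 < n) : (secondLast hn : ℕ) = 2*n - 2 := rfl

@[simp] theorem val_last (hn : 0 < n) : (last hn : ℕ) = 2*n - 1 := rfl

theorem le_last (hn : 0 < n) (i : Fin (2*n)) : i ≤ last hn := by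
  rw [Fin.le_def, val_last]
  omega

theorem secondLast_lt_last (hn : 0 < n) : secondLast hn < last hn := by
  rw [Fin.lt_def, val_secondLast, val_last]
  omega

theorem lt_secondLast_of_ne {hn : 0 < n} {i : Fin (2*n)} (h₁ : i ≠ secondLast hn)
    (h₂ : i ≠ last hn) : i < secondLast hn := by
  rw [Ne, Fin.ext_iff, val_secondLast] at h₁
  rw [Ne, Fin.ext_iff, val_last] at h₂
  rw [Fin.lt_def, val_secondLast]
  omega

def closedEnds (μ : Fin (2*n) → Fin (2*n)) : Set (Fin (2*n)) :=
  {d | ∀ c ≤ d, μ c ≤ d}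

variable {μ : Fin (2*n) → Fin (2*n)}

theorem isOutermost_iff (hμ : IsLinkPattern n μ) {a b : Fin (2*n)} :
    (a < b ∧ μ a = b ∧ ∀ c d, c < a → b < d → μ c ≠ d) ↔
      b ∈ closedEnds μ ∧ μ b = a := by
  constructor
  · rintro ⟨hab, rfl, hout⟩
    refine ⟨fun c hc => not_lt.1 fun hlt => ?_, hμ.1 a⟩
    rcases lt_trichotomy c a with hca | rfl | hac
    · exact hout c _ hca hlt rfl
    · exact hlt.false
    · have hc : c < μ a := hc.lt_of_ne fun h => by
        rw [h, hμ.1] at hlt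
        exact lt_asymm (h ▸ hac) hlt
      exact hμ.2.2 a c (μ a) (μ c) hac hc hlt rfl rfl
  · rintro ⟨hb, rfl⟩
    have hlt : μ b < b := (hb _ le_rfl).lt_of_ne (hμ.2.1 b)
    exact ⟨hlt, hμ.1 b, fun c d hc hd => ((hb c (hc.trans hlt).le).trans_lt hd).ne⟩

theorem exposure_eq_ncard_closedEnds (hμ : IsLinkPattern n μ) :
    exposure n μ = (closedEnds μ).ncard :=
  Nat.card_congr
    { toFun := fun p => ⟨p.1.2, ((isOutermost_iff hμ).1 p.2).1⟩
      invFun := fun d => ⟨(μ d, d), (isOutermost_iff hμ).2 ⟨d.2, rfl⟩⟩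
      left_inv := fun p => Subtype.ext (Prod.ext ((isOutermost_iff hμ).1 p.2).2 rfl)
      right_inv := fun _ => rfl }

theorem last_mem_closedEnds (hn : 0 < n) : last hn ∈ closedEnds μ :=
  fun _ _ => le_last hn _

theorem apply_lt_of_mem_closedEnds (hμ : IsLinkPattern n μ) {x : Fin (2*n)}
    (hx : x ∈ closedEnds μ) : μ x < x :=
  (hx x le_rfl).lt_of_ne (hμ.2.1 x)

theorem lt_secondLast_of_mem_closedEnds {hn : 0 < n} (hpair : μ (secondLast hn) = last hn)
    {x : Fin (2*n)} (hxC : x ∈ closedEnds μ) (hxb : x ≠ last hn) : x < secondLast hn := by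
  refine lt_secondLast_of_ne (fun h => ?_) hxb
  subst h
  exact (secondLast_lt_last hn).not_ge (hpair ▸ hxC _ le_rfl)

theorem closedEnds_inter_Iic (hμ : IsLinkPattern n μ) {x : Fin (2*n)} (hx : x ∈ closedEnds μ) :
    closedEnds μ ∩ Iic x = insert x (closedEnds μ ∩ Iio (μ x)) := by
  ext d
  simp only [mem_inter_iff, mem_Iic, mem_Iio, mem_insert_iff]
  constructor
  · rintro ⟨hd, hdx⟩
    refine or_iff_not_imp_left.2 fun hne => ⟨hd, lt_of_not_ge fun h => ?_⟩
    exact (hdx.lt_of_ne hne).not_ge (hμ.1 x ▸ hd _ h)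
  · rintro (rfl | ⟨hd, hdx⟩)
    · exact ⟨hx, le_rfl⟩
    · exact ⟨hd, (hdx.trans (apply_lt_of_mem_closedEnds hμ hx)).le⟩

/-- Conjugating `π` by the transposition `(x, 2n-1)` turns its links `(π x, x)` and
`(2n-2, 2n-1)` into `(π x, 2n-1)` and `(x, 2n-2)`, which `e` turns back. -/
def rewire (hn : 0 < n) (π : Fin (2*n) → Fin (2*n)) (x : Fin (2*n)) : Fin (2*n) → Fin (2*n) :=
  Equiv.swap x (last hn) ∘ π ∘ Equiv.swap x (last hn)

theorem rewire_last (hn : 0 < n) (π : Fin (2*n) → Fin (2*n)) : rewire hn π (last hn) = π := by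
  simp [rewire]

section Rewire

variable {hn : 0 < n} {π : Fin (2*n) → Fin (2*n)} {x : Fin (2*n)}

theorem apply_last_of_apply_secondLast (hπ : IsLinkPattern n π)
    (hpair : π (secondLast hn) = last hn) : π (last hn) = secondLast hn := by
  rw [← hpair, hπ.1]

theorem rewire_apply_secondLast (hpair : π (secondLast hn) = last hn) (hx : x < secondLast hn) :
    rewire hn π x (secondLast hn) = x := by
  simp [rewire, Equiv.swap_apply_of_ne_of_ne hx.ne' (secondLast_lt_last hn).ne, hpair]

theorem rewire_apply_self (hπ : IsLinkPattern n π) (hpair : π (secondLast hn) = last hn)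
    (hx : x < secondLast hn) : rewire hn π x x = secondLast hn := by
  simp [rewire, apply_last_of_apply_secondLast hπ hpair,
    Equiv.swap_apply_of_ne_of_ne hx.ne' (secondLast_lt_last hn).ne]

theorem apply_ne_last (hπ : IsLinkPattern n π) (hpair : π (secondLast hn) = last hn)
    (hx : x < secondLast hn) : π x ≠ last hn := fun h =>
  hx.ne (by rw [← hπ.1 x, h, apply_last_of_apply_secondLast hπ hpair])

theorem rewire_apply_last (hπ : IsLinkPattern n π) (hpair : π (secondLast hn) = last hn)
    (hx : x < secondLast hn) : rewire hn π x (last hn) = π x := by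
  simp [rewire, Equiv.swap_apply_of_ne_of_ne (hπ.2.1 x) (apply_ne_last hπ hpair hx)]

theorem rewire_apply_apply_self (hπ : IsLinkPattern n π) (hpair : π (secondLast hn) = last hn)
    (hx : x < secondLast hn) : rewire hn π x (π x) = last hn := by
  simp [rewire, Equiv.swap_apply_of_ne_of_ne (hπ.2.1 x) (apply_ne_last hπ hpair hx), hπ.1 x]

theorem rewire_apply_of_ne (hπ : IsLinkPattern n π) (hpair : π (secondLast hn) = last hn)
    {i : Fin (2*n)} (h₁ : i ≠ x) (h₂ : i ≠ π x) (h₃ : i ≠ secondLast hn)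
    (h₄ : i ≠ last hn) : rewire hn π x i = π i := by
  have h₂' : π i ≠ x := fun h => h₂ (by rw [← h, hπ.1])
  have h₃' : π i ≠ last hn := fun h =>
    h₃ (by rw [← hπ.1 i, h, apply_last_of_apply_secondLast hπ hpair])
  simp [rewire, Equiv.swap_apply_of_ne_of_ne h₁ h₄, Equiv.swap_apply_of_ne_of_ne h₂' h₃']

theorem rewire_involutive (hπ : IsLinkPattern n π) (i : Fin (2*n)) :
    rewire hn π x (rewire hn π x i) = i := by
  simp [rewire, hπ.1]

theorem rewire_ne_self (hπ : IsLinkPattern n π) (i : Fin (2*n)) : rewire hn π x i ≠ i := by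
  intro h
  apply hπ.2.1 (Equiv.swap x (last hn) i)
  simpa [rewire, Equiv.swap_apply_eq_iff] using h

theorem rewire_apply_of_lt (hπ : IsLinkPattern n π) (hpair : π (secondLast hn) = last hn)
    (hx : x < secondLast hn) {i : Fin (2*n)} (hi : i < x) (hi' : i ≠ π x) :
    rewire hn π x i = π i :=
  rewire_apply_of_ne hπ hpair hi.ne hi' (hi.trans hx).ne
    ((hi.trans hx).trans (secondLast_lt_last hn)).ne

theorem rewire_apply_of_lt_secondLast (hπ : IsLinkPattern n π)
    (hpair : π (secondLast hn) = last hn) (hx : x < secondLast hn) {i : Fin (2*n)}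
    (hi : i < secondLast hn) (h : rewire hn π x i < secondLast hn) : rewire hn π x i = π i := by
  refine rewire_apply_of_ne hπ hpair (fun e => ?_) (fun e => ?_) hi.ne
    (hi.trans (secondLast_lt_last hn)).ne
  · rw [e, rewire_apply_self hπ hpair hx] at h
    exact h.false
  · rw [e, rewire_apply_apply_self hπ hpair hx] at h
    exact (secondLast_lt_last hn).not_gt h

/-- A crossing of `rewire π x` would either be a crossing of `π` or a link of `π` leaving
the closed segment `[0, x]`. -/
theorem rewire_noncrossing (hπ : IsLinkPattern n π) (hpair : π (secondLast hn) = last hn)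
    (hxC : x ∈ closedEnds π) (hx : x < secondLast hn) (a b c d : Fin (2*n))
    (hab : a < b) (hbc : b < c) (hcd : c < d) (hac : rewire hn π x a = c)
    (hbd : rewire hn π x b = d) : False := by
  have hy : π x < x := apply_lt_of_mem_closedEnds hπ hxC
  have hpartner : ∀ i j, rewire hn π x i = j → rewire hn π x j = i := fun i j h => by
    rw [← h, rewire_involutive hπ]
  rcases eq_or_ne d (last hn) with rfl | hdb
  · obtain rfl : b = π x := by rw [← hpartner _ _ hbd, rewire_apply_last hπ hpair hx]
    rw [rewire_apply_of_lt hπ hpair hx (hab.trans hy) hab.ne] at hac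
    rcases lt_or_ge x c with hxc | hcx_le
    · exact (hxC a (hab.trans hy).le).not_gt (hac ▸ hxc)
    · have hcx : c < x := hcx_le.lt_of_ne fun h => hab.ne (by rw [← hπ.1 a, hac, h])
      exact hπ.2.2 a (π x) c x hab hbc hcx hac (hπ.1 x)
  rcases eq_or_ne d (secondLast hn) with rfl | hda
  · have hb : b = x := by rw [← hpartner _ _ hbd, rewire_apply_secondLast hpair hx]
    rw [hb] at hab hbc
    rcases eq_or_ne a (π x) with rfl | hay
    · rw [rewire_apply_apply_self hπ hpair hx] at hac
      exact (hac ▸ hcd).not_gt (secondLast_lt_last hn)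
    · rw [rewire_apply_of_lt hπ hpair hx hab hay] at hac
      exact (hxC a hab.le).not_gt (hac ▸ hbc)
  have hd := lt_secondLast_of_ne hda hdb
  have hb := hbc.trans (hcd.trans hd)
  refine hπ.2.2 a b c d hab hbc hcd ?_ ?_
  · have hc : rewire hn π x a < secondLast hn := hac ▸ hcd.trans hd
    rw [← rewire_apply_of_lt_secondLast hπ hpair hx (hab.trans hb) hc, hac]
  · rw [← rewire_apply_of_lt_secondLast hπ hpair hx hb (by rwa [hbd]), hbd]

theorem isLinkPattern_rewire (hπ : IsLinkPattern n π) (hpair : π (secondLast hn) = last hn)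
    (hxC : x ∈ closedEnds π) : IsLinkPattern n (rewire hn π x) := by
  rcases eq_or_ne x (last hn) with rfl | hxb
  · rwa [rewire_last]
  exact ⟨rewire_involutive hπ, rewire_ne_self hπ,
    rewire_noncrossing hπ hpair hxC (lt_secondLast_of_mem_closedEnds hpair hxC hxb)⟩

theorem closedEnds_rewire (hπ : IsLinkPattern n π) (hpair : π (secondLast hn) = last hn)
    (hxC : x ∈ closedEnds π) (hx : x < secondLast hn) :
    closedEnds (rewire hn π x) = insert (last hn) (closedEnds π ∩ Iio (π x)) := by
  have hy : π x < x := apply_lt_of_mem_closedEnds hπ hxC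
  have hfix : ∀ c < π x, rewire hn π x c = π c := fun c hc =>
    rewire_apply_of_lt hπ hpair hx (hc.trans hy) hc.ne
  ext d
  simp only [mem_insert_iff, mem_inter_iff, mem_Iio]
  constructor
  · refine fun hd => or_iff_not_imp_left.2 fun hdb => ?_
    have hdy : d < π x := lt_of_not_ge fun h =>
      hdb ((le_last hn d).antisymm (rewire_apply_apply_self hπ hpair hx ▸ hd _ h))
    exact ⟨fun c hc => hfix c (hc.trans_lt hdy) ▸ hd c hc, hdy⟩
  · rintro (rfl | ⟨hd, hdy⟩)
    · exact last_mem_closedEnds hn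
    · exact fun c hc => (hfix c (hc.trans_lt hdy)).symm ▸ hd c hc

theorem exposure_rewire (hπ : IsLinkPattern n π) (hpair : π (secondLast hn) = last hn)
    (hxC : x ∈ closedEnds π) :
    exposure n (rewire hn π x) = (closedEnds π ∩ Iic x).ncard := by
  rcases eq_or_ne x (last hn) with rfl | hxb
  · have hC : closedEnds π ∩ Iic (last hn) = closedEnds π :=
      inter_eq_left.2 fun d _ => le_last hn d
    rw [rewire_last, exposure_eq_ncard_closedEnds hπ, hC]
  have hx := lt_secondLast_of_mem_closedEnds hpair hxC hxb
  have hy : π x < x := apply_lt_of_mem_closedEnds hπ hxC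
  rw [exposure_eq_ncard_closedEnds (isLinkPattern_rewire hπ hpair hxC),
    closedEnds_rewire hπ hpair hxC hx, closedEnds_inter_Iic hπ hxC,
    ncard_insert_of_notMem fun h => h.2.not_ge (le_last hn _),
    ncard_insert_of_notMem fun h => h.2.not_gt hy]

end Rewire

theorem eFun_apply (hn : 0 < n) (μ : Fin (2*n) → Fin (2*n)) (i : Fin (2*n)) :
    eFun n μ i =
      if μ (secondLast hn) = last hn then μ i
      else if i = secondLast hn then last hn
      else if i = last hn then secondLast hn
      else if i = μ (secondLast hn) then μ (last hn)
      else if i = μ (last hn) then μ (secondLast hn)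
      else μ i := by
  simp only [eFun, dif_pos (show 1 ≤ n from hn)]
  rfl

section Fiber

variable {hn : 0 < n} {μ : Fin (2*n) → Fin (2*n)}

theorem eFun_eq_self (h : μ (secondLast hn) = last hn) : eFun n μ = μ :=
  funext fun i => by rw [eFun_apply hn, if_pos h]

theorem eFun_apply_secondLast : eFun n μ (secondLast hn) = last hn := by
  by_cases h : μ (secondLast hn) = last hn
  · rw [eFun_eq_self h, h]
  · rw [eFun_apply hn, if_neg h, if_pos rfl]

theorem eFun_apply_last (hμ : IsLinkPattern n μ) : eFun n μ (last hn) = secondLast hn := by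
  by_cases h : μ (secondLast hn) = last hn
  · rw [eFun_eq_self h, ← h, hμ.1]
  · rw [eFun_apply hn, if_neg h, if_neg (secondLast_lt_last hn).ne', if_pos rfl]

theorem eFun_apply_of_ne (h : μ (secondLast hn) ≠ last hn) {i : Fin (2*n)}
    (h₁ : i ≠ secondLast hn) (h₂ : i ≠ last hn) (h₃ : i ≠ μ (secondLast hn))
    (h₄ : i ≠ μ (last hn)) : eFun n μ i = μ i := by
  rw [eFun_apply hn, if_neg h, if_neg h₁, if_neg h₂, if_neg h₃, if_neg h₄]

theorem apply_last_ne_secondLast (hμ : IsLinkPattern n μ) (h : μ (secondLast hn) ≠ last hn) :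
    μ (last hn) ≠ secondLast hn := fun e => h (by rw [← e, hμ.1])

theorem eFun_apply_apply_secondLast (hμ : IsLinkPattern n μ)
    (h : μ (secondLast hn) ≠ last hn) : eFun n μ (μ (secondLast hn)) = μ (last hn) := by
  rw [eFun_apply hn, if_neg h, if_neg (hμ.2.1 _), if_neg h, if_pos rfl]

theorem eFun_apply_apply_last (hμ : IsLinkPattern n μ) (h : μ (secondLast hn) ≠ last hn) :
    eFun n μ (μ (last hn)) = μ (secondLast hn) := by
  rw [eFun_apply hn, if_neg h, if_neg (apply_last_ne_secondLast hμ h), if_neg (hμ.2.1 _),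
    if_neg (hμ.injective.ne (secondLast_lt_last hn).ne'), if_pos rfl]

theorem apply_last_lt_apply_secondLast (hμ : IsLinkPattern n μ)
    (h : μ (secondLast hn) ≠ last hn) :
    μ (last hn) < μ (secondLast hn) ∧ μ (secondLast hn) < secondLast hn := by
  have hx := lt_secondLast_of_ne (hμ.2.1 _) h
  have hy := lt_secondLast_of_ne (apply_last_ne_secondLast hμ h) (hμ.2.1 _)
  refine ⟨lt_of_le_of_ne (not_lt.1 fun hxy => ?_)
    (hμ.injective.ne (secondLast_lt_last hn).ne'), hx⟩
  exact hμ.2.2 _ _ _ _ hxy hy (secondLast_lt_last hn) (hμ.1 _) (hμ.1 _)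

/-- A link of `μ` leaving `[0, μ (2n-2)]` would cross the link `(μ (2n-2), 2n-2)`. -/
theorem apply_secondLast_mem_closedEnds (hμ : IsLinkPattern n μ)
    (h : μ (secondLast hn) ≠ last hn) : μ (secondLast hn) ∈ closedEnds (eFun n μ) := by
  obtain ⟨hyx, hx⟩ := apply_last_lt_apply_secondLast hμ h
  intro c hc
  rcases eq_or_ne c (μ (secondLast hn)) with rfl | hcx
  · exact (eFun_apply_apply_secondLast hμ h).trans_le hyx.le
  rcases eq_or_ne c (μ (last hn)) with rfl | hcy
  · exact (eFun_apply_apply_last hμ h).le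
  have hc' := hc.lt_of_ne hcx
  rw [eFun_apply_of_ne h (hc'.trans hx).ne
    ((hc'.trans hx).trans (secondLast_lt_last hn)).ne hcx hcy]
  refine not_lt.1 fun hlt => hμ.2.2 c _ (μ c) (secondLast hn) hc' hlt ?_ rfl (hμ.1 _)
  refine lt_secondLast_of_ne (fun e => hcx ?_) (fun e => hcy ?_) <;> rw [← e, hμ.1]

theorem eq_rewire_eFun (hμ : IsLinkPattern n μ) (hπ : IsLinkPattern n (eFun n μ))
    (h : μ (secondLast hn) ≠ last hn) : μ = rewire hn (eFun n μ) (μ (secondLast hn)) := by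
  have hx := (apply_last_lt_apply_secondLast hμ h).2
  have hpair : eFun n μ (secondLast hn) = last hn := eFun_apply_secondLast
  have hπx := eFun_apply_apply_secondLast hμ h
  funext i
  by_cases h₁ : i = secondLast hn
  · rw [h₁, rewire_apply_secondLast hpair hx]
  by_cases h₂ : i = last hn
  · rw [h₂, rewire_apply_last hπ hpair hx, hπx]
  by_cases h₃ : i = μ (secondLast hn)
  · rw [h₃, rewire_apply_self hπ hpair hx, hμ.1]
  by_cases h₄ : i = μ (last hn)
  · rw [h₄, ← hπx, rewire_apply_apply_self hπ hpair hx, hπx, hμ.1]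
  rw [rewire_apply_of_ne hπ hpair h₃ (hπx ▸ h₄) h₁ h₂,
    eFun_apply_of_ne h h₁ h₂ h₃ h₄]

theorem exists_eq_rewire_of_eFun_eq (hn : 0 < n) {π : Fin (2*n) → Fin (2*n)}
    (hμ : IsLinkPattern n μ) (hπ : IsLinkPattern n π) (hE : eFun n μ = π) :
    ∃ x ∈ closedEnds π, μ = rewire hn π x := by
  subst hE
  by_cases h : μ (secondLast hn) = last hn
  · exact ⟨last hn, last_mem_closedEnds hn, by rw [rewire_last, eFun_eq_self h]⟩
  · exact ⟨_, apply_secondLast_mem_closedEnds hμ h, eq_rewire_eFun hμ hπ h⟩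

theorem eFun_rewire {π : Fin (2*n) → Fin (2*n)} {x : Fin (2*n)} (hπ : IsLinkPattern n π)
    (hpair : π (secondLast hn) = last hn) (hxC : x ∈ closedEnds π) :
    eFun n (rewire hn π x) = π := by
  rcases eq_or_ne x (last hn) with rfl | hxb
  · rw [rewire_last, eFun_eq_self hpair]
  have hx := lt_secondLast_of_mem_closedEnds hpair hxC hxb
  have hμ := isLinkPattern_rewire hπ hpair hxC
  have hμa := rewire_apply_secondLast hpair hx
  have hμb := rewire_apply_last hπ hpair hx
  have h : rewire hn π x (secondLast hn) ≠ last hn := by rwa [hμa]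
  have hμx := eFun_apply_apply_secondLast hμ h
  have hμy := eFun_apply_apply_last hμ h
  rw [hμa, hμb] at hμx hμy
  funext i
  by_cases h₁ : i = secondLast hn
  · rw [h₁, eFun_apply_secondLast, hpair]
  by_cases h₂ : i = last hn
  · rw [h₂, eFun_apply_last hμ, apply_last_of_apply_secondLast hπ hpair]
  by_cases h₃ : i = x
  · rw [h₃, hμx]
  by_cases h₄ : i = π x
  · rw [h₄, hμy, hπ.1]
  rw [eFun_apply_of_ne h h₁ h₂ (by rwa [hμa]) (by rwa [hμb]),
    rewire_apply_of_ne hπ hpair h₃ h₄ h₁ h₂]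

end Fiber

end LinkPattern

open LinkPattern

/-- For `n ≥ 2` and a link pattern `π'` of `n` strands pairing `2n-2` with `2n-1`
with exposure number `m`: the exposure number is a bijection from the fiber
`e⁻¹(π')` onto `{1, …, m}`, i.e. every element of the fiber has exposure number in
`{1, …, m}` and for each `1 ≤ j ≤ m` there is exactly one `μ` in the fiber with
exposure number `j`. -/
theorem eFun_fiber_exposure_bijection (n : ℕ) (hn : 2 ≤ n)
    (π' : Fin (2*n) → Fin (2*n)) (hπ' : IsLinkPattern n π')
    (hpair : π' ⟨2*n - 2, by omega⟩ = (⟨2*n - 1, by omega⟩ : Fin (2*n)))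
    (m : ℕ) (hm : exposure n π' = m) :
    (∀ μ : Fin (2*n) → Fin (2*n), IsLinkPattern n μ → eFun n μ = π' →
        1 ≤ exposure n μ ∧ exposure n μ ≤ m) ∧
    (∀ j : ℕ, 1 ≤ j → j ≤ m →
        ∃! μ : {μ : Fin (2*n) → Fin (2*n) // IsLinkPattern n μ},
          eFun n μ.1 = π' ∧ exposure n μ.1 = j) := by
  have hn₀ : 0 < n := by omega
  have hpair' : π' (secondLast hn₀) = last hn₀ := hpair
  have hrank := (closedEnds π').toFinite.bijOn_ncard_inter_Iic
  rw [← hm, exposure_eq_ncard_closedEnds hπ']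
  refine ⟨fun μ hμ hE => ?_, fun j hj hjm => ?_⟩
  · obtain ⟨x, hx, rfl⟩ := exists_eq_rewire_of_eFun_eq hn₀ hμ hπ' hE
    rw [exposure_rewire hπ' hpair' hx]
    exact hrank.mapsTo hx
  · obtain ⟨x, hx, hxj⟩ := hrank.surjOn ⟨hj, hjm⟩
    refine ⟨⟨rewire hn₀ π' x, isLinkPattern_rewire hπ' hpair' hx⟩,
      ⟨eFun_rewire hπ' hpair' hx, (exposure_rewire hπ' hpair' hx).trans hxj⟩, ?_⟩
    rintro ⟨μ, hμ⟩ ⟨hE, hμj⟩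
    obtain ⟨x', hx', rfl⟩ := exists_eq_rewire_of_eFun_eq hn₀ hμ hπ' hE
    rw [exposure_rewire hπ' hpair' hx'] at hμj
    exact Subtype.ext (congrArg (rewire hn₀ π') (hrank.injOn hx' hx (hμj.trans hxj.symm)))
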